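/- arXiv:1801.05899 — 3 statements merged into one kernel-verified Lean document; each statement's English description precedes it below -/
import Mathlib

section
/- Let p be a prime, q = p^m, and let C be a linear code of length n over 𝔽_q. Then, as a polynomial identity in two commuting indeterminates x and y, Σ_{c ∈ C} x^{c₁(π_c)} y^{c_p(π_c)} = Σ_{c ∈ C} x^{q(n − wt(c))} y^{(q/p)·wt(c)}; that is, the cycle index of the permutation group G(C) evaluated at s₁ = x and s_p = y equals w_C(x^q, y^{q/p}), where w_C is the weight enumerator of C. -/
open scoped Classical

/-- The permutation `π_h` of `{1,…,n} × A` induced by `h = (a_1, …, a_n) ∈ A^n`,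
sending `(i, x)` to `(i, x + a_i)`. -/
def translationPerm {A : Type*} [AddGroup A] {n : ℕ} (h : Fin n → A) :
    Equiv.Perm (Fin n × A) :=
  Equiv.prodShear (Equiv.refl (Fin n)) (fun i => Equiv.addRight (h i))

/-- `c_ℓ(σ)`: the number of cycles of length `ℓ` in the cycle decomposition of `σ`,
fixed points being counted as cycles of length `1`. -/
noncomputable def cycleCount {α : Type*} [Fintype α] (σ : Equiv.Perm α) (ℓ : ℕ) : ℕ :=
  if ℓ = 1 then (Finset.univ.filter fun x => σ x = x).card else σ.cycleType.count ℓ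

/-- For a prime `p`, `q = p^m`, and a linear code `C ≤ F^n` over a finite
field `F` with `q` elements, the polynomial identity (in two commuting indeterminates
`x = X 0` and `y = X 1`)
`Σ_{c ∈ C} x^{c₁(π_c)} y^{c_p(π_c)} = Σ_{c ∈ C} x^{q(n − wt c)} y^{(q/p)·wt c}`
holds: the cycle index of `G(C)` at `s₁ = x`, `s_p = y` is `w_C(x^q, y^{q/p})`. -/
theorem stmt_3 (p m n : ℕ) (hp : p.Prime) (hm : 0 < m)
    (F : Type*) [Field F] [Fintype F] (hF : Fintype.card F = p ^ m)
    (C : Submodule F (Fin n → F)) :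
    ∑ c : C, (MvPolynomial.X 0 : MvPolynomial (Fin 2) ℤ) ^
          cycleCount (translationPerm (c : Fin n → F)) 1 *
        MvPolynomial.X 1 ^ cycleCount (translationPerm (c : Fin n → F)) p
      = ∑ c : C, (MvPolynomial.X 0 : MvPolynomial (Fin 2) ℤ) ^
          (p ^ m * (n - (Finset.univ.filter fun i => (c : Fin n → F) i ≠ 0).card)) *
        MvPolynomial.X 1 ^
          (p ^ m / p * (Finset.univ.filter fun i => (c : Fin n → F) i ≠ 0).card) := by
  have hpF : (p : F) = 0 := by
    have h := FiniteField.cast_card_eq_zero F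
    rw [hF, Nat.cast_pow] at h
    exact pow_eq_zero_iff hm.ne' |>.mp h
  refine Finset.sum_congr rfl fun c _ => ?_
  set a : Fin n → F := (c : Fin n → F) with ha
  set σ : Equiv.Perm (Fin n × F) := translationPerm a with hσ
  have hσapp : ∀ z : Fin n × F, σ z = (z.1, z.2 + a z.1) := fun z => rfl
  set wt : ℕ := (Finset.univ.filter fun i => a i ≠ 0).card with hwt
  -- σ^p = 1
  have hpow : ∀ k : ℕ, ∀ z : Fin n × F, (σ ^ k) z = (z.1, z.2 + k • a z.1) := by
    intro k
    induction k with
    | zero => intro z; simp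
    | succ k ih =>
        intro z
        rw [pow_succ, Equiv.Perm.mul_apply, ih, hσapp]
        simp only [succ_nsmul, Prod.mk.injEq, true_and, add_assoc]
        rw [add_comm (a z.1)]
  have hord : σ ^ p = 1 := by
    refine Equiv.ext fun z => ?_
    rw [hpow]
    simp [nsmul_eq_mul, hpF]
  -- fixed points
  have hfix : (Finset.univ.filter fun z : Fin n × F => σ z = z).card = p ^ m * (n - wt) := by
    have hset : (Finset.univ.filter fun z : Fin n × F => σ z = z)
        = (Finset.univ.filter fun i => ¬ a i ≠ 0) ×ˢ (Finset.univ : Finset F) := by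
      ext z
      simp [hσapp z, Prod.ext_iff, Finset.mem_product]
    rw [hset, Finset.card_product, Finset.card_univ, hF]
    have := Finset.card_filter_add_card_filter_not
      (s := (Finset.univ : Finset (Fin n))) (p := fun i => a i ≠ 0)
    rw [Finset.card_univ, Fintype.card_fin] at this
    rw [mul_comm]
    congr 1
    omega
  -- support
  have hsupp : σ.support.card = p ^ m * wt := by
    have hset : σ.support = (Finset.univ.filter fun i => a i ≠ 0) ×ˢ (Finset.univ : Finset F) := by
      ext z
      simp [Equiv.Perm.mem_support, hσapp z, Prod.ext_iff, Finset.mem_product]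
    rw [hset, Finset.card_product, Finset.card_univ, hF, mul_comm]
  -- cycle type
  have hct : σ.cycleType = Multiset.replicate (Multiset.card σ.cycleType) p := by
    apply Multiset.eq_replicate_card.mpr
    intro r hr
    have h2 := Equiv.Perm.two_le_of_mem_cycleType hr
    have hdvd : r ∣ p := by
      have hl := Equiv.Perm.lcm_cycleType σ
      exact (Multiset.dvd_lcm hr).trans (hl ▸ orderOf_dvd_of_pow_eq_one hord)
    rcases hp.eq_one_or_self_of_dvd r hdvd with h1 | h
    · omega
    · exact h
  have hcount : p * σ.cycleType.count p = p ^ m * wt := by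
    rw [← hsupp, ← Equiv.Perm.sum_cycleType σ]
    conv_rhs => rw [hct]
    rw [hct]
    simp [Multiset.count_replicate, mul_comm, Multiset.sum_replicate]
  have hcp : σ.cycleType.count p = p ^ m / p * wt := by
    have hppos := hp.pos
    have hmm : p ^ m = p * p ^ (m - 1) := by
      conv_lhs => rw [show m = 1 + (m - 1) by omega]
      rw [pow_add, pow_one]
    have : p * σ.cycleType.count p = p * (p ^ (m - 1) * wt) := by
      rw [hcount, hmm]; ring
    have hc := Nat.eq_of_mul_eq_mul_left hppos this
    rw [hc, hmm, Nat.mul_div_cancel_left _ hppos]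
  have h1 : cycleCount σ 1 = p ^ m * (n - wt) := by
    rw [cycleCount, if_pos rfl]
    convert hfix using 2
    ext z
    simp
  have hpne1 : p ≠ 1 := hp.ne_one
  have h2 : cycleCount σ p = p ^ m / p * wt := by
    rw [cycleCount, if_neg hpne1]
    convert hcp using 3
  rw [h1, h2]
end

section
/- Let q be a prime power, g ≥ 1, and let C be a linear code of length n over 𝔽_q. Then, as a polynomial identity in commuting indeterminates x and y, Σ_{h ∈ C^g} x^{n − wt^{(g)}(h)} y^{wt^{(g)}(h)} = Σ_{r=0}^{g} [g]_r · Σ_{D ≤ C, dim D = r} x^{n − ‖D‖} y^{‖D‖}, where [g]_0 = 1 and [g]_r = (q^g − 1)(q^g − q)⋯(q^g − q^{r−1}) for r ≥ 1. Equivalently, the specialization of the complete weight enumerator of genus g at x_𝟘 = x and x_a = y for all a ≠ 𝟘 equals Σ_{r=0}^{g} [g]_r w_C^r(x, y). -/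
/-!
Group the tuples `h ∈ C^g` by the subcode `D` spanned by their `g` entries. A column of `h`
vanishes exactly at a coordinate outside `supp D`, so `wt^{(g)}(h) = ‖D‖`. The tuples spanning
a fixed `D` of dimension `r` are, after choosing a basis of `D` and transposing, the linearly
independent `r`-tuples in `F^g`; there are `[g]_r` of them, and none when `r > g`.
-/

open scoped Classical

open Finset Module Submodule

theorem Finset.sum_smul_eq_sum_range_smul_sum_filter {β A : Type*} [AddCommMonoid A]
    (s : Finset β) (d : β → ℕ) (c : ℕ → ℕ) (t : β → A) {g : ℕ} (hc : ∀ r, g < r → c r = 0) :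
    ∑ b ∈ s, c (d b) • t b = ∑ r ∈ range (g + 1), c r • ∑ b ∈ s with d b = r, t b := by
  calc ∑ b ∈ s, c (d b) • t b = ∑ b ∈ s with d b ∈ range (g + 1), c (d b) • t b := by
        refine (sum_filter_of_ne fun b _ hb => mem_range.2 ?_).symm
        by_contra! hgt
        exact hb (by rw [hc _ hgt, zero_smul])
    _ = ∑ r ∈ range (g + 1), ∑ b ∈ s with d b = r, c (d b) • t b :=
        (sum_fiberwise_eq_sum_filter _ _ _ _).symm
    _ = _ := sum_congr rfl fun r _ => by
        rw [smul_sum]; exact sum_congr rfl fun b hb => by rw [(mem_filter.1 hb).2]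

theorem LinearMap.exists_mem_span_range_apply_ne_zero_iff {R M N ι : Type*} [Semiring R]
    [AddCommMonoid M] [Module R M] [AddCommMonoid N] [Module R N] (f : M →ₗ[R] N) (v : ι → M) :
    (∃ w ∈ span R (Set.range v), f w ≠ 0) ↔ ∃ j, f (v j) ≠ 0 := by
  rw [← not_iff_not]
  push Not
  exact (span_le (p := LinearMap.ker f)).trans Set.range_subset_iff

section Counting

variable {F : Type*} [Field F] [Fintype F]

theorem card_linearIndependent_eq_prod_range {V : Type*} [AddCommGroup V] [Module F V]
    [Finite V] (k : ℕ) :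
    Nat.card {s : Fin k → V // LinearIndependent F s} =
      ∏ i ∈ range k, (Fintype.card F ^ finrank F V - Fintype.card F ^ i) := by
  rcases le_or_gt k (finrank F V) with hk | hk
  · rw [card_linearIndependent hk,
      Fin.prod_univ_eq_prod_range (fun i => Fintype.card F ^ finrank F V - Fintype.card F ^ i)]
  · have : IsEmpty {s : Fin k → V // LinearIndependent F s} :=
      ⟨fun s => by simpa using (s.2.fintype_card_le_finrank.trans_lt hk).ne⟩
    rw [Nat.card_of_isEmpty]
    exact (prod_eq_zero (mem_range.2 hk) (Nat.sub_self (Fintype.card F ^ finrank F V))).symm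

theorem card_spanning_tuples {ι V : Type*} [Fintype ι] [AddCommGroup V] [Module F V]
    [Module.Finite F V] :
    Nat.card {v : ι → V // span F (Set.range v) = ⊤} =
      ∏ i ∈ range (finrank F V), (Fintype.card F ^ Fintype.card ι - Fintype.card F ^ i) := by
  let e : V ≃ₗ[F] (Fin (finrank F V) → F) := (Module.finBasis F V).equivFun
  have transport : {v : ι → V // span F (Set.range v) = ⊤} ≃
      {v : ι → Fin (finrank F V) → F // span F (Set.range v) = ⊤} :=
    Equiv.subtypeEquiv (Equiv.piCongrRight fun _ => e.toEquiv) fun v => by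
      rw [← Submodule.map_eq_top_iff (e := e), map_span, ← Set.range_comp]; rfl
  have transpose : {v : ι → Fin (finrank F V) → F // span F (Set.range v) = ⊤} ≃
      {s : Fin (finrank F V) → ι → F // LinearIndependent F s} :=
    Equiv.subtypeEquiv (Equiv.piComm _) fun v => by
      rw [← span_flip_eq_top_iff_linearIndependent]; rfl
  rw [Nat.card_congr (transport.trans transpose), card_linearIndependent_eq_prod_range,
    Module.finrank_fintype_fun_eq_card]

theorem card_tuples_span_eq {ι M : Type*} [Fintype ι] [AddCommGroup M] [Module F M]
    {C D : Submodule F M} [Module.Finite F D] (hDC : D ≤ C) :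
    Nat.card {h : ι → C // span F (Set.range fun j => (h j : M)) = D} =
      ∏ i ∈ range (finrank F D), (Fintype.card F ^ Fintype.card ι - Fintype.card F ^ i) := by
  have mem_of_span_eq {v : ι → M} (hv : span F (Set.range v) = D) (j : ι) : v j ∈ D :=
    hv ▸ subset_span ⟨j, rfl⟩
  let e : {h : ι → C // span F (Set.range fun j => (h j : M)) = D} ≃
      {v : ι → D // span F (Set.range v) = ⊤} :=
    { toFun := fun h => ⟨fun j => ⟨h.1 j, mem_of_span_eq h.2 j⟩,
        (span_range_subtype_eq_top_iff D _).2 h.2⟩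
      invFun := fun v => ⟨fun j => ⟨v.1 j, hDC (v.1 j).2⟩,
        (span_range_subtype_eq_top_iff D fun j => (v.1 j).2).1 v.2⟩
      left_inv := fun _ => rfl
      right_inv := fun _ => rfl }
  rw [Nat.card_congr e, card_spanning_tuples]

theorem sum_tuples_eq_sum_le {ι M A : Type*} [Fintype ι] [DecidableEq ι] [AddCommGroup M]
    [Module F M] [Fintype M] [AddCommMonoid A] (C : Submodule F M) (f : Submodule F M → A) :
    ∑ h : ι → C, f (span F (Set.range fun j => (h j : M))) =
      ∑ D ∈ univ.filter (· ≤ C),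
        (∏ i ∈ range (finrank F D), (Fintype.card F ^ Fintype.card ι - Fintype.card F ^ i)) •
          f D := by
  have span_le (h : ι → C) : span F (Set.range fun j => (h j : M)) ∈ univ.filter (· ≤ C) :=
    mem_filter.2 ⟨mem_univ _, span_le.2 <| Set.range_subset_iff.2 fun j => (h j).2⟩
  rw [← sum_fiberwise_of_maps_to' fun h _ => span_le h]
  refine sum_congr rfl fun D hD => ?_
  rw [sum_const, ← card_tuples_span_eq (mem_filter.1 hD).2, Nat.card_eq_fintype_card,
    Fintype.card_subtype]

end Counting

theorem stmt_8_general (g n : ℕ) (F : Type*) [Field F] [Fintype F]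
    (C : Submodule F (Fin n → F)) :
    ∑ h : Fin g → C, (MvPolynomial.X 0 : MvPolynomial (Fin 2) ℤ) ^
          (n - (Finset.univ.filter fun i => (fun j => (h j : Fin n → F) i) ≠ 0).card) *
        MvPolynomial.X 1 ^
          (Finset.univ.filter fun i => (fun j => (h j : Fin n → F) i) ≠ 0).card
      = ∑ r ∈ Finset.range (g + 1),
          ((∏ i ∈ Finset.range r,
              ((Fintype.card F) ^ g - (Fintype.card F) ^ i) : ℕ) :
            MvPolynomial (Fin 2) ℤ) *
          ∑ D ∈ Finset.univ.filter fun D : Submodule F (Fin n → F) =>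
              D ≤ C ∧ Module.finrank F D = r,
            (MvPolynomial.X 0 : MvPolynomial (Fin 2) ℤ) ^
                (n - (Finset.univ.filter fun i : Fin n => ∃ w ∈ D, w i ≠ 0).card) *
              MvPolynomial.X 1 ^
                (Finset.univ.filter fun i : Fin n => ∃ w ∈ D, w i ≠ 0).card := by
  let supp (D : Submodule F (Fin n → F)) : Finset (Fin n) :=
    univ.filter fun i => ∃ w ∈ D, w i ≠ 0
  let term (D : Submodule F (Fin n → F)) : MvPolynomial (Fin 2) ℤ :=
    MvPolynomial.X 0 ^ (n - (supp D).card) * MvPolynomial.X 1 ^ (supp D).card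
  have supp_span (h : Fin g → C) :
      (univ.filter fun i => (fun j => (h j : Fin n → F) i) ≠ 0) =
        supp (span F (Set.range fun j => (h j : Fin n → F))) :=
    filter_congr fun i _ => Function.ne_iff.trans
      ((LinearMap.proj i).exists_mem_span_range_apply_ne_zero_iff _).symm
  let c (r : ℕ) : ℕ := ∏ i ∈ range r, (Fintype.card F ^ g - Fintype.card F ^ i)
  have c_eq_zero (r : ℕ) (hr : g < r) : c r = 0 :=
    prod_eq_zero (mem_range.2 hr) (Nat.sub_self _)
  calc _ = ∑ h : Fin g → C, term (span F (Set.range fun j => (h j : Fin n → F))) :=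
        sum_congr rfl fun h _ => by simp only [term, supp_span]
    _ = ∑ D ∈ univ.filter (· ≤ C), c (finrank F D) • term D := by
        rw [sum_tuples_eq_sum_le C term, Fintype.card_fin]
    _ = ∑ r ∈ range (g + 1),
          c r • ∑ D ∈ (univ.filter (· ≤ C)).filter
            (fun D : Submodule F (Fin n → F) => finrank F D = r), term D :=
        sum_smul_eq_sum_range_smul_sum_filter _ _ c term c_eq_zero
    _ = _ := by simp only [filter_filter, nsmul_eq_mul, c, term, supp]

/-- Over a finite field `F` with `q` elements, for `g ≥ 1` and a linear code
`C ≤ F^n`, with `h ∈ C^g` identified with its columns and `wt^{(g)} h` the number of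
nonzero columns, and with `‖D‖` the size of the support of a subcode `D ≤ C`,
`Σ_{h ∈ C^g} x^{n − wt^{(g)} h} y^{wt^{(g)} h}
   = Σ_{r=0}^{g} [g]_r Σ_{D ≤ C, dim D = r} x^{n − ‖D‖} y^{‖D‖}`,
where `[g]_r = (q^g − 1)(q^g − q)⋯(q^g − q^{r−1})` (and `[g]_0 = 1`); i.e. the genus-`g`
complete weight enumerator specialized at `x_𝟘 = x`, `x_a = y (a ≠ 𝟘)` is
`Σ_r [g]_r w_C^r(x, y)`. -/
theorem stmt_8 (g n : ℕ) (hg : 0 < g) (F : Type*) [Field F] [Fintype F]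
    (C : Submodule F (Fin n → F)) :
    ∑ h : Fin g → C, (MvPolynomial.X 0 : MvPolynomial (Fin 2) ℤ) ^
          (n - (Finset.univ.filter fun i => (fun j => (h j : Fin n → F) i) ≠ 0).card) *
        MvPolynomial.X 1 ^
          (Finset.univ.filter fun i => (fun j => (h j : Fin n → F) i) ≠ 0).card
      = ∑ r ∈ Finset.range (g + 1),
          ((∏ i ∈ Finset.range r,
              ((Fintype.card F) ^ g - (Fintype.card F) ^ i) : ℕ) :
            MvPolynomial (Fin 2) ℤ) *
          ∑ D ∈ Finset.univ.filter fun D : Submodule F (Fin n → F) =>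
              D ≤ C ∧ Module.finrank F D = r,
            (MvPolynomial.X 0 : MvPolynomial (Fin 2) ℤ) ^
                (n - (Finset.univ.filter fun i : Fin n => ∃ w ∈ D, w i ≠ 0).card) *
              MvPolynomial.X 1 ^
                (Finset.univ.filter fun i : Fin n => ∃ w ∈ D, w i ≠ 0).card :=
  stmt_8_general g n F C
end

section
/- Let k ≥ 2, g ≥ 1, and let C be a ℤ_k-code of length n (a ℤ_k-submodule of ℤ_k^n). Then the cycle index of the permutation group G(C^g) satisfies, as an identity in the commuting indeterminates s_1, s_2, s_3, …: Σ_{h ∈ C^g} Π_{ℓ ≥ 1} s_ℓ^{c_ℓ(π_h)} = Σ_{h=(a_1,…,a_n) ∈ C^g} Π_{i=1}^{n} s_{d_i(h)}^{k^g / d_i(h)}, where for h with columns a_i = (a_{1i}, …, a_{gi}) one sets d_i(h) = k / gcd(a_{1i}, …, a_{gi}, k). -/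
/-!
Every point `(i, x)` of `Fin n × A` has period `addOrderOf (a i)` under `π_h`, so `π_h` splits
the block `{i} × A` into `|A| / addOrderOf (a i)` cycles of that length, and the cycle index
monomial of `π_h` is `∏ i, s_{addOrderOf (a i)} ^ (|A| / addOrderOf (a i))`. For
`A = (ℤ/k)^g` the order of a column `a_i` is the lcm of the orders `k / gcd(a_{ji}, k)` of its
entries, which is `k / gcd(a_{1i}, …, a_{gi}, k) = d_i(h)`.
-/

open scoped Classical

open Finset Function

theorem Finset.lcm_div_gcd_eq_div_gcd {ι : Type*} {k : ℕ} (hk : k ≠ 0) (s : Finset ι)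
    (v : ι → ℕ) :
    s.lcm (fun j => k / k.gcd (v j)) = k / k.gcd (s.gcd v) := by
  induction s using Finset.induction with
  | empty => simp [Nat.div_self (Nat.pos_of_ne_zero hk)]
  | insert j s _ ih =>
    rw [lcm_insert, gcd_insert, ih, lcm_eq_nat_lcm,
      Nat.div_lcm_eq_div_gcd (Nat.gcd_dvd_left _ _) (Nat.gcd_dvd_left _ _), Nat.gcd_assoc,
      Nat.gcd_left_comm (v j), Nat.gcd_gcd_self_right_left]
    rfl

theorem ZMod.addOrderOf_pi {k : ℕ} [NeZero k] {ι : Type*} [Fintype ι] (f : ι → ZMod k) :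
    addOrderOf f = k / Nat.gcd (univ.gcd fun j => (f j).val) k := by
  have hk : k ≠ 0 := NeZero.ne k
  have h (j : ι) : addOrderOf (f j) = k / k.gcd (f j).val := by
    rw [← ZMod.addOrderOf_coe _ hk, ZMod.natCast_zmod_val]
  rw [Pi.addOrderOf, Finset.lcm_congr rfl fun j _ => h j, Finset.lcm_div_gcd_eq_div_gcd hk,
    Nat.gcd_comm]

namespace Equiv.Perm

variable {α : Type*} [Fintype α]

theorem minimalPeriod_eq_card_support_cycleOf {σ : Perm α} {x : α} (hx : x ∈ σ.support) :
    minimalPeriod σ x = #(σ.cycleOf x).support := by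
  have hc : (σ.cycleOf x).IsCycle := isCycle_cycleOf σ (mem_support.1 hx)
  have hcx : σ.cycleOf x x ≠ x := by rwa [cycleOf_apply_self, ← mem_support]
  rw [← hc.orderOf]
  refine Nat.dvd_right_iff_eq.mp fun m => ?_
  rw [← isPeriodicPt_iff_minimalPeriod_dvd, orderOf_dvd_iff_pow_eq_one, hc.pow_eq_one_iff' hcx,
    cycleOf_pow_apply_self, IsPeriodicPt, IsFixedPt, iterate_eq_pow]

theorem cycleType_count_mul_eq_card_minimalPeriod (σ : Perm α) {ℓ : ℕ} (hℓ : 2 ≤ ℓ) :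
    σ.cycleType.count ℓ * ℓ = #{x | minimalPeriod σ x = ℓ} := by
  set cycles := σ.cycleFactorsFinset.filter fun c => #c.support = ℓ
  have hcount : σ.cycleType.count ℓ = #cycles := by
    rw [cycleType_def, Multiset.count_map, Finset.card, Finset.filter_val]
    simp_rw [Function.comp_apply, eq_comm]
  have hmoved {x : α} (hx : minimalPeriod σ x = ℓ) : x ∈ σ.support := by
    rw [mem_support, Ne, ← IsFixedPt, ← minimalPeriod_eq_one_iff_isFixedPt]
    omega
  have hmaps : ∀ x ∈ ({x | minimalPeriod σ x = ℓ} : Finset α), σ.cycleOf x ∈ cycles := by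
    intro x hx
    rw [mem_filter_univ] at hx
    rw [mem_filter, cycleOf_mem_cycleFactorsFinset_iff, ← hx,
      minimalPeriod_eq_card_support_cycleOf (hmoved hx)]
    exact ⟨hmoved hx, rfl⟩
  have hfiber : ∀ c ∈ cycles, {x ∈ ({x | minimalPeriod σ x = ℓ} : Finset α) | σ.cycleOf x = c}
      = c.support := by
    intro c hc
    obtain ⟨hcσ, hcℓ⟩ := mem_filter.1 hc
    ext y
    simp only [mem_filter, mem_univ, true_and]
    constructor
    · rintro ⟨hy, rfl⟩
      exact mem_support_cycleOf_iff.2 ⟨SameCycle.refl _ _, hmoved hy⟩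
    · intro hy
      have hyc : σ.cycleOf y = c := (cycle_is_cycleOf hy hcσ).symm
      rw [minimalPeriod_eq_card_support_cycleOf (mem_cycleFactorsFinset_support_le hcσ hy), hyc]
      exact ⟨hcℓ, rfl⟩
  rw [card_eq_sum_card_fiberwise hmaps,
    sum_congr rfl fun c hc => by rw [hfiber c hc, (mem_filter.1 hc).2], sum_const, smul_eq_mul,
    hcount]

end Equiv.Perm

section CycleCount

variable {α : Type*} [Fintype α]

theorem cycleCount_zero (σ : Equiv.Perm α) : cycleCount σ 0 = 0 := by
  rw [cycleCount, if_neg zero_ne_one, Multiset.count_eq_zero]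
  exact fun h => absurd (Equiv.Perm.two_le_of_mem_cycleType h) (by omega)

theorem cycleCount_mul_eq_card_minimalPeriod (σ : Equiv.Perm α) {ℓ : ℕ} (hℓ : 0 < ℓ) :
    cycleCount σ ℓ * ℓ = #{x | minimalPeriod σ x = ℓ} := by
  obtain rfl | hℓ2 := (Nat.one_le_of_lt hℓ).eq_or_lt
  · simp only [cycleCount, if_true, mul_one, minimalPeriod_eq_one_iff_isFixedPt, IsFixedPt]
  · rw [cycleCount, if_neg hℓ2.ne', σ.cycleType_count_mul_eq_card_minimalPeriod hℓ2]

end CycleCount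

section TranslationPerm

variable {A : Type*} [AddGroup A] {n : ℕ}

theorem translationPerm_pow_apply (a : Fin n → A) (m : ℕ) (p : Fin n × A) :
    (translationPerm a ^ m) p = (p.1, p.2 + m • a p.1) := by
  induction m with
  | zero => simp
  | succ m ih =>
    rw [pow_succ', Equiv.Perm.mul_apply, ih, succ_nsmul, ← add_assoc]
    rfl

theorem minimalPeriod_translationPerm (a : Fin n → A) (p : Fin n × A) :
    minimalPeriod (translationPerm a) p = addOrderOf (a p.1) := by
  refine Nat.dvd_right_iff_eq.mp fun m => ?_
  rw [← isPeriodicPt_iff_minimalPeriod_dvd, addOrderOf_dvd_iff_nsmul_eq_zero, IsPeriodicPt,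
    IsFixedPt, Equiv.Perm.iterate_eq_pow, translationPerm_pow_apply, Prod.ext_iff]
  simp

variable [Fintype A]

theorem cycleCount_translationPerm (a : Fin n → A) (ℓ : ℕ) :
    cycleCount (translationPerm a) ℓ =
      ∑ i with addOrderOf (a i) = ℓ, Fintype.card A / addOrderOf (a i) := by
  rcases ℓ.eq_zero_or_pos with rfl | hℓ
  · simp [cycleCount_zero, (addOrderOf_pos _).ne']
  refine Nat.eq_of_mul_eq_mul_right hℓ ?_
  have hperiod : ({p | minimalPeriod (translationPerm a) p = ℓ} : Finset (Fin n × A)) =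
      ({i | addOrderOf (a i) = ℓ} : Finset (Fin n)) ×ˢ univ := by
    ext p
    simp [minimalPeriod_translationPerm]
  rw [cycleCount_mul_eq_card_minimalPeriod _ hℓ, hperiod, card_product, card_univ, sum_mul,
    ← smul_eq_mul, ← sum_const]
  refine sum_congr rfl fun i hi => ?_
  rw [← (mem_filter.1 hi).2, Nat.div_mul_cancel addOrderOf_dvd_card]

theorem finprod_pow_cycleCount_translationPerm {M : Type*} [CommMonoid M] (s : ℕ → M)
    (a : Fin n → A) :
    ∏ᶠ ℓ, s ℓ ^ cycleCount (translationPerm a) ℓ =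
      ∏ i, s (addOrderOf (a i)) ^ (Fintype.card A / addOrderOf (a i)) := by
  have h (ℓ : ℕ) : s ℓ ^ cycleCount (translationPerm a) ℓ =
      ∏ i with addOrderOf (a i) = ℓ,
        s (addOrderOf (a i)) ^ (Fintype.card A / addOrderOf (a i)) := by
    rw [cycleCount_translationPerm, ← prod_pow_eq_pow_sum]
    exact prod_congr rfl fun i hi => by rw [(mem_filter.1 hi).2]
  rw [finprod_congr h, finprod_prod_filter]

end TranslationPerm

theorem stmt_13_general (k g n : ℕ) [NeZero k]
    (C : Submodule (ZMod k) (Fin n → ZMod k)) :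
    ∑ h : Fin g → C, ∏ᶠ ℓ : ℕ, (MvPolynomial.X ℓ : MvPolynomial ℕ ℤ) ^
          cycleCount (translationPerm fun i => fun j => (h j : Fin n → ZMod k) i) ℓ
      = ∑ h : Fin g → C, ∏ i : Fin n,
          (MvPolynomial.X
              (k / Nat.gcd (Finset.univ.gcd fun j => ((h j : Fin n → ZMod k) i).val) k) :
            MvPolynomial ℕ ℤ) ^
            (k ^ g /
              (k / Nat.gcd (Finset.univ.gcd fun j => ((h j : Fin n → ZMod k) i).val) k)) := by
  refine sum_congr rfl fun h _ => ?_
  simp_rw [finprod_pow_cycleCount_translationPerm, ZMod.addOrderOf_pi, Fintype.card_fun,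
    ZMod.card, Fintype.card_fin]

/-- For `k ≥ 2`, `g ≥ 1`, and a `ℤ/k`-code `C ≤ (ℤ/k)^n`, the cycle index
of `G(C^g)` satisfies, in the commuting indeterminates `s_ℓ = X ℓ` (`ℓ ≥ 1`):
`Σ_{h ∈ C^g} Π_{ℓ ≥ 1} s_ℓ^{c_ℓ(π_h)} = Σ_{h ∈ C^g} Π_{i=1}^n s_{d_i(h)}^{k^g / d_i(h)}`,
where `d_i(h) = k / gcd(a_{1i}, …, a_{gi}, k)` for the columns `a_i` of `h`
(here the factor of the formal product at `ℓ = 0` is `1`, since no cycle has length 0). -/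
theorem stmt_13 (k g n : ℕ) [NeZero k] (hk : 2 ≤ k) (hg : 0 < g)
    (C : Submodule (ZMod k) (Fin n → ZMod k)) :
    ∑ h : Fin g → C, ∏ᶠ ℓ : ℕ, (MvPolynomial.X ℓ : MvPolynomial ℕ ℤ) ^
          cycleCount (translationPerm fun i => fun j => (h j : Fin n → ZMod k) i) ℓ
      = ∑ h : Fin g → C, ∏ i : Fin n,
          (MvPolynomial.X
              (k / Nat.gcd (Finset.univ.gcd fun j => ((h j : Fin n → ZMod k) i).val) k) :
            MvPolynomial ℕ ℤ) ^
            (k ^ g /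
              (k / Nat.gcd (Finset.univ.gcd fun j => ((h j : Fin n → ZMod k) i).val) k)) :=
  stmt_13_general k g n C
end
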